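/- Let λ ∈ ℂ with λ ≠ 1, let r ∈ ℤ_{≥0}, let n ∈ ℤ_{≥0}, and let p(x) be a complex polynomial of degree at most n written as p(x) = Σ_{k=0}^{n} C_k H_k^{(r)}(x|λ). Then for every 0 ≤ k ≤ n, C_k = (1/((1−λ)^r·k!))·Σ_{j=0}^{r} binom(r,j)·(−λ)^{r−j}·p^{(k)}(j), where p^{(k)} denotes the k-th derivative of p; equivalently, p(x) = Σ_{k=0}^{n} ( (1/((1−λ)^r·k!))·Σ_{j=0}^{r} binom(r,j)·(−λ)^{r−j}·p^{(k)}(j) )·H_k^{(r)}(x|λ). -/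

import Mathlib

/-!
Let `E` be the shift `q(x) ↦ q(x + 1)`. On the generating function `Σ H_m(x) tᵐ/m!` the shift
acts as multiplication by `eᵗ`, so `(E - λ)ʳ` multiplies it by `(eᵗ - λ)ʳ` and cancels the
denominator: `(E - λ)ʳ H_m^{(r)} = (1 - λ)ʳ xᵐ`. Applying `(E - λ)ʳ` to `p = Σ C_m H_m^{(r)}`
therefore gives `(1 - λ)ʳ Σ C_m xᵐ`, whose `k`-th coefficient `(1 - λ)ʳ C_k` is also its `k`-th
Taylor coefficient at `0`, namely `(1/k!) Σ_j (r choose j) (-λ)^(r-j) p^{(k)}(j)`.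
-/

open Polynomial PowerSeries Finset

open scoped Nat

/-- `(E - λ)ʳ`, where `E q = q(X + 1)`; note `taylor j q = q(X + j)`. -/
noncomputable def shiftSubPow {R : Type*} [CommRing R] (lam : R) (r : ℕ) : R[X] →ₗ[R] R[X] :=
  ∑ j ∈ range (r + 1), ((r.choose j : R) * (-lam) ^ (r - j)) • taylor (j : R)

theorem shiftSubPow_apply {R : Type*} [CommRing R] (lam : R) (r : ℕ) (q : R[X]) :
    shiftSubPow lam r q =
      ∑ j ∈ range (r + 1),
        Polynomial.C ((r.choose j : R) * (-lam) ^ (r - j)) * taylor (j : R) q := by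
  simp [shiftSubPow, Polynomial.smul_eq_C_mul]

theorem eval_iterate_derivative_eq_coeff_taylor {R : Type*} [CommRing R] (k : ℕ) (a : R)
    (q : R[X]) :
    (derivative^[k] q).eval a = k ! * (taylor a q).coeff k := by
  rw [taylor_coeff, ← factorial_smul_hasseDeriv, LinearMap.smul_apply, eval_smul, nsmul_eq_mul]

theorem sum_eval_iterate_derivative_eq_coeff_shiftSubPow {R : Type*} [CommRing R] (lam : R)
    (r k : ℕ) (q : R[X]) :
    ∑ j ∈ range (r + 1), (r.choose j : R) * (-lam) ^ (r - j) * (derivative^[k] q).eval (j : R) =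
      k ! * (shiftSubPow lam r q).coeff k := by
  simp only [shiftSubPow, LinearMap.sum_apply, LinearMap.smul_apply, finsetSum_coeff,
    Polynomial.coeff_smul, eval_iterate_derivative_eq_coeff_taylor, mul_sum, smul_eq_mul]
  refine sum_congr rfl fun j _ => ?_
  ring

theorem exp_sub_C_pow {R : Type*} [CommRing R] [Algebra ℚ R] (a : R) (r : ℕ) :
    (exp R - PowerSeries.C a) ^ r =
      ∑ j ∈ range (r + 1), PowerSeries.C ((r.choose j : R) * (-a) ^ (r - j)) *
        rescale (j : R) (exp R) := by
  rw [sub_eq_add_neg, add_pow]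
  refine sum_congr rfl fun j _ => ?_
  rw [exp_pow_eq_rescale_exp, ← map_neg, ← map_pow, map_mul, map_natCast]
  ring

theorem map_taylor_rescale_X_exp {R : Type*} [CommRing R] [Algebra ℚ R] (a : R) :
    PowerSeries.map (taylorAlgHom a : R[X] →+* R[X]) (rescale Polynomial.X (exp R[X])) =
      rescale (Polynomial.C a) (exp R[X]) * rescale Polynomial.X (exp R[X]) := by
  rw [← rescale_map, map_exp, exp_mul_exp_eq_exp_add, add_comm]
  simp

theorem map_taylor_exp_sub_C_pow {R : Type*} [CommRing R] [Algebra ℚ R] (a b : R) (r : ℕ) :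
    PowerSeries.map (taylorAlgHom a : R[X] →+* R[X])
        ((exp R[X] - PowerSeries.C (Polynomial.C b)) ^ r) =
      (exp R[X] - PowerSeries.C (Polynomial.C b)) ^ r := by
  simp [map_pow, map_sub, map_exp]

theorem exp_sub_C_pow_ne_zero {R : Type*} [CommRing R] [IsDomain R] [Algebra ℚ R] {a : R}
    (ha : a ≠ 1) (r : ℕ) : (exp R - PowerSeries.C a) ^ r ≠ 0 := by
  refine ne_of_apply_ne PowerSeries.constantCoeff ?_
  simpa using pow_ne_zero r (sub_ne_zero.mpr ha.symm)

theorem shiftSubPow_eq_C_mul_X_pow {K : Type*} [Field K] [CharZero K] {lam : K} (hlam : lam ≠ 1)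
    {r : ℕ} {H : ℕ → K[X]}
    (hH : (exp K[X] - PowerSeries.C (Polynomial.C lam)) ^ r *
        mk (fun n => Polynomial.C (n ! : K)⁻¹ * H n) =
      PowerSeries.C (Polynomial.C ((1 - lam) ^ r)) * rescale Polynomial.X (exp K[X]))
    (m : ℕ) :
    shiftSubPow lam r (H m) = Polynomial.C ((1 - lam) ^ r) * Polynomial.X ^ m := by
  set A := (exp K[X] - PowerSeries.C (Polynomial.C lam)) ^ r
  set G := mk (fun n => Polynomial.C (n ! : K)⁻¹ * H n)
  set E := PowerSeries.C (Polynomial.C ((1 - lam) ^ r)) * rescale Polynomial.X (exp K[X])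
  set S := ∑ j ∈ range (r + 1),
    PowerSeries.C (Polynomial.C ((r.choose j : K) * (-lam) ^ (r - j))) *
      PowerSeries.map (taylorAlgHom (j : K) : K[X] →+* K[X]) G
  -- `S` is the generating function of `shiftSubPow lam r (H m)`, and `E` that of `(1 - λ)ʳ Xᵐ`.
  have hAS : A * S = A * E := by
    calc A * S = ∑ j ∈ range (r + 1),
          PowerSeries.C (Polynomial.C ((r.choose j : K) * (-lam) ^ (r - j))) *
            PowerSeries.map (taylorAlgHom (j : K) : K[X] →+* K[X]) (A * G) := by
          simp only [S, mul_sum, map_mul, A, map_taylor_exp_sub_C_pow]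
          ring_nf
      _ = ∑ j ∈ range (r + 1),
          PowerSeries.C (Polynomial.C ((r.choose j : K) * (-lam) ^ (r - j))) *
            rescale (j : K[X]) (exp K[X]) * E := by
          simp only [hH, E, map_mul, map_taylor_rescale_X_exp, PowerSeries.map_C,
            AlgHom.coe_toRingHom, taylorAlgHom_apply, taylor_C, Polynomial.C_eq_natCast]
          exact sum_congr rfl fun j _ => by ring
      _ = A * E := by
          simp only [A]
          rw [exp_sub_C_pow, sum_mul]
          simp
  have hA : A ≠ 0 :=
    exp_sub_C_pow_ne_zero (fun h => hlam (Polynomial.C_injective (by rw [h, map_one]))) r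
  have hfac : algebraMap ℚ K[X] (1 / m !) = Polynomial.C (m ! : K)⁻¹ := by
    simp
  have hS : PowerSeries.coeff m S = Polynomial.C (m ! : K)⁻¹ * shiftSubPow lam r (H m) := by
    simp only [S, G, map_sum, PowerSeries.coeff_C_mul, PowerSeries.coeff_map, PowerSeries.coeff_mk,
      shiftSubPow_apply, mul_sum, AlgHom.coe_toRingHom, taylorAlgHom_apply, taylor_mul, taylor_C]
    exact sum_congr rfl fun j _ => by ring
  have hE : PowerSeries.coeff m E =
      Polynomial.C (m ! : K)⁻¹ * (Polynomial.C ((1 - lam) ^ r) * Polynomial.X ^ m) := by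
    rw [PowerSeries.coeff_C_mul, coeff_rescale, coeff_exp, hfac]
    ring
  have hcoeff := congrArg (PowerSeries.coeff m) (mul_left_cancel₀ hA hAS)
  rw [hS, hE] at hcoeff
  exact mul_left_cancel₀ (by simp [Nat.factorial_ne_zero]) hcoeff

theorem frobenius_euler_higher_order_coefficients_general
    (lam : ℂ) (hlam : lam ≠ 1) (H : ℕ → ℕ → Polynomial ℂ)
    (hH : ∀ r : ℕ,
      (PowerSeries.exp (Polynomial ℂ) - (PowerSeries.C : Polynomial ℂ →+* PowerSeries (Polynomial ℂ)) (Polynomial.C lam)) ^ r *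
          PowerSeries.mk (fun n => Polynomial.C ((n.factorial : ℂ))⁻¹ * H r n) =
        (PowerSeries.C : Polynomial ℂ →+* PowerSeries (Polynomial ℂ)) (Polynomial.C ((1 - lam) ^ r)) *
          PowerSeries.rescale Polynomial.X (PowerSeries.exp (Polynomial ℂ)))
    (r : ℕ) (n : ℕ) (p : Polynomial ℂ) (Cc : ℕ → ℂ)
    (hC : p = ∑ k ∈ Finset.range (n + 1), Polynomial.C (Cc k) * H r k)
    (k : ℕ) (hk : k ≤ n) :
    Cc k = (1 / ((1 - lam) ^ r * (k.factorial : ℂ))) *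
      ∑ j ∈ Finset.range (r + 1),
        (r.choose j : ℂ) * (-lam) ^ (r - j) * (Polynomial.derivative^[k] p).eval (j : ℂ) := by
  have hT : (shiftSubPow lam r p).coeff k = (1 - lam) ^ r * Cc k := by
    simp only [hC, map_sum, ← Polynomial.smul_eq_C_mul, LinearMap.map_smul,
      shiftSubPow_eq_C_mul_X_pow hlam (hH r), finsetSum_coeff, Polynomial.coeff_smul,
      Polynomial.coeff_X_pow, smul_eq_mul, mul_ite, mul_one, mul_zero, sum_ite_eq, mem_range]
    rw [if_pos (Nat.lt_succ_of_le hk), mul_comm]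
  rw [sum_eval_iterate_derivative_eq_coeff_shiftSubPow, hT]
  have hlam' : (1 : ℂ) - lam ≠ 0 := sub_ne_zero.mpr hlam.symm
  have hk' : (k ! : ℂ) ≠ 0 := Nat.cast_ne_zero.mpr k.factorial_ne_zero
  field_simp

theorem frobenius_euler_higher_order_coefficients
    (lam : ℂ) (hlam : lam ≠ 1) (H : ℕ → ℕ → Polynomial ℂ)
    (hH : ∀ r : ℕ,
      (PowerSeries.exp (Polynomial ℂ) - (PowerSeries.C : Polynomial ℂ →+* PowerSeries (Polynomial ℂ)) (Polynomial.C lam)) ^ r *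
          PowerSeries.mk (fun n => Polynomial.C ((n.factorial : ℂ))⁻¹ * H r n) =
        (PowerSeries.C : Polynomial ℂ →+* PowerSeries (Polynomial ℂ)) (Polynomial.C ((1 - lam) ^ r)) *
          PowerSeries.rescale Polynomial.X (PowerSeries.exp (Polynomial ℂ)))
    (r : ℕ) (n : ℕ) (p : Polynomial ℂ) (hp : p.degree ≤ n) (Cc : ℕ → ℂ)
    (hC : p = ∑ k ∈ Finset.range (n + 1), Polynomial.C (Cc k) * H r k)
    (k : ℕ) (hk : k ≤ n) :
    Cc k = (1 / ((1 - lam) ^ r * (k.factorial : ℂ))) *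
      ∑ j ∈ Finset.range (r + 1),
        (r.choose j : ℂ) * (-lam) ^ (r - j) * (Polynomial.derivative^[k] p).eval (j : ℂ) :=
  frobenius_euler_higher_order_coefficients_general lam hlam H hH r n p Cc hC k hk
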